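/- Let R be a Noetherian commutative ring over a field of characteristic zero and ∂ : R → R a derivation. If I ⊆ R is an ideal with ∂(I) ⊆ I, then the radical √I also satisfies ∂(√I) ⊆ √I. -/

import Mathlib

/-!
If `x ^ (m + 1) * ∂x ^ j ∈ I`, then applying `∂`, multiplying by `∂x` and subtracting
`j * ∂²x` times the original element leaves `(m + 1) * x ^ m * ∂x ^ (j + 2) ∈ I`.
In characteristic zero `m + 1` is a unit, so each step trades one power of `x` for two powers
of `∂x`; starting from `x ^ n ∈ I`, after `n` steps `∂x ^ (2 * n) ∈ I`.
-/

namespace Derivation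

section CommRing

variable {k R : Type*} [CommSemiring k] [CommRing R] [Algebra k R] (D : Derivation k R R)

theorem apply_mul_apply_pow_succ_mul_pow_sub (x : R) (m j : ℕ) :
    D x * D (x ^ (m + 1) * D x ^ j) - j * D (D x) * (x ^ (m + 1) * D x ^ j) =
      (m + 1 : R) * (x ^ m * D x ^ (j + 2)) := by
  rcases j with _ | j
  · simp only [leibniz, leibniz_pow, pow_zero, map_one_eq_zero, nsmul_eq_mul, smul_eq_mul,
      Nat.add_sub_cancel]
    push_cast
    ring
  · simp only [leibniz, leibniz_pow, nsmul_eq_mul, smul_eq_mul, Nat.add_sub_cancel]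
    push_cast
    ring

theorem succ_mul_pow_mul_apply_pow_add_two_mem {I : Ideal R} (hI : ∀ y ∈ I, D y ∈ I)
    {x : R} {m j : ℕ} (h : x ^ (m + 1) * D x ^ j ∈ I) :
    (m + 1 : R) * (x ^ m * D x ^ (j + 2)) ∈ I := by
  rw [← D.apply_mul_apply_pow_succ_mul_pow_sub]
  exact I.sub_mem (I.mul_mem_left _ (hI _ h)) (I.mul_mem_left _ h)

end CommRing

section CharZero

variable {k R : Type*} [Field k] [CharZero k] [CommRing R] [Algebra k R]
  (D : Derivation k R R) {I : Ideal R}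

theorem pow_mul_apply_pow_add_two_mem (hI : ∀ y ∈ I, D y ∈ I) {x : R} {m j : ℕ}
    (h : x ^ (m + 1) * D x ^ j ∈ I) : x ^ m * D x ^ (j + 2) ∈ I := by
  have hunit : IsUnit (m + 1 : R) := by
    simpa using (Nat.cast_add_one_ne_zero (R := k) m).isUnit.map (algebraMap k R)
  exact (I.unit_mul_mem_iff_mem hunit).mp (D.succ_mul_pow_mul_apply_pow_add_two_mem hI h)

theorem pow_mul_apply_pow_add_mem (hI : ∀ y ∈ I, D y ∈ I) {x : R} (m i : ℕ) {j : ℕ}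
    (h : x ^ (m + i) * D x ^ j ∈ I) : x ^ m * D x ^ (j + 2 * i) ∈ I := by
  induction i generalizing j with
  | zero => simpa using h
  | succ i ih =>
    have step := D.pow_mul_apply_pow_add_two_mem hI (m := m + i) h
    simpa only [add_assoc, mul_add, mul_one, add_comm 2] using ih step

theorem apply_pow_two_mul_mem_of_pow_mem (hI : ∀ y ∈ I, D y ∈ I) {x : R} {n : ℕ}
    (h : x ^ n ∈ I) : D x ^ (2 * n) ∈ I := by
  simpa using D.pow_mul_apply_pow_add_mem hI 0 n (j := 0) (by simpa using h)

end CharZero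

end Derivation

theorem derivation_radical_invariant_general
    {k R : Type*} [Field k] [CharZero k] [CommRing R] [Algebra k R]
    (D : Derivation k R R) (I : Ideal R)
    (hI : ∀ x ∈ I, D x ∈ I) :
    ∀ x ∈ I.radical, D x ∈ I.radical := by
  rintro x ⟨n, hn⟩
  exact ⟨2 * n, D.apply_pow_two_mul_mem_of_pow_mem hI hn⟩

/-- Over a field of characteristic zero, a derivation of a Noetherian ring
preserving an ideal also preserves its radical. -/
theorem derivation_radical_invariant
    {k R : Type*} [Field k] [CharZero k] [CommRing R] [Algebra k R]
    [IsNoetherianRing R]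
    (D : Derivation k R R) (I : Ideal R)
    (hI : ∀ x ∈ I, D x ∈ I) :
    ∀ x ∈ I.radical, D x ∈ I.radical :=
  derivation_radical_invariant_general D I hI
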